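/- arXiv:2409.02605 — 2 statements merged into one kernel-verified Lean document; each statement's English description precedes it below -/
import Mathlib

section
/- Consider a finite graph Γ = (𝒱, ℰ) where each edge e is identified with [0,1] and carries the Schrödinger operator h_e = -d²/dz² + V_e with V_e ∈ L²((0,1)), V_e(z)=V_e(1-z). Let λ be such that φ_e(1,λ) ≠ 0 for all e, where φ_e solves h_e φ_e = λφ_e, φ_e(0)=0, φ_e'(0)=1. Then a family {u_e} of edge solutions of (h_e - λ)u_e = 0 that is continuous at vertices (defining a vertex function û) satisfies the δ-coupling condition ∑_{e ∋ v} u_e'(v) = C_v û(v) at an interior vertex v of degree d_v if and only if the vertex Schrödinger equation (1/d_v)∑_{w∼v} û(w)/φ_{e_{vw}}(1,λ) = ((1/d_v)∑_{e ∋ v} φ_e'(1,λ)/φ_e(1,λ) + C_v/d_v)·û(v) holds at v. -/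
/-!
Fix an edge `e = vw` and let `ψ(z) = φ_e(1 - z)`. Since `V_e` is symmetric, `ψ` solves the same
equation as `u_e`, so their Wronskian `u_e ψ' - u_e' ψ` is constant on `[0, 1]`. Evaluating it at
`z = 0` and `z = 1` (where `ψ = φ_e(0) = 0` and `ψ' = -φ_e'(0) = -1`) gives
`u_e'(0) φ_e(1) = û(w) - û(v) φ_e'(1)`. Summing over the edges at `v`, the δ-coupling condition
becomes the vertex equation after division by `d_v`.
-/

open Set

section Wronskian

variable {g y₁ y₁' y₂ y₂' : ℝ → ℂ}

theorem hasDerivAt_wronskian {z : ℝ} (h₁ : HasDerivAt y₁ (y₁' z) z)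
    (h₁' : HasDerivAt y₁' (g z * y₁ z) z) (h₂ : HasDerivAt y₂ (y₂' z) z)
    (h₂' : HasDerivAt y₂' (g z * y₂ z) z) :
    HasDerivAt (fun x => y₁ x * y₂' x - y₁' x * y₂ x) 0 z := by
  have h := (h₁.mul h₂').sub (h₁'.mul h₂)
  rwa [show y₁' z * y₂' z + y₁ z * (g z * y₂ z) - (g z * y₁ z * y₂ z + y₁' z * y₂' z) = 0 by
    ring] at h

theorem wronskian_eq_of_hasDerivAt {a b : ℝ} (hab : a ≤ b)
    (h₁ : ∀ z ∈ Icc a b, HasDerivAt y₁ (y₁' z) z)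
    (h₁' : ∀ z ∈ Icc a b, HasDerivAt y₁' (g z * y₁ z) z)
    (h₂ : ∀ z ∈ Icc a b, HasDerivAt y₂ (y₂' z) z)
    (h₂' : ∀ z ∈ Icc a b, HasDerivAt y₂' (g z * y₂ z) z) :
    y₁ b * y₂' b - y₁' b * y₂ b = y₁ a * y₂' a - y₁' a * y₂ a := by
  have hW : ∀ z ∈ Icc a b, HasDerivAt (fun x => y₁ x * y₂' x - y₁' x * y₂ x) 0 z :=
    fun z hz => hasDerivAt_wronskian (h₁ z hz) (h₁' z hz) (h₂ z hz) (h₂' z hz)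
  exact constant_of_has_deriv_right_zero (fun z hz => (hW z hz).continuousAt.continuousWithinAt)
    (fun z hz => (hW z (Ico_subset_Icc_self hz)).hasDerivWithinAt) b (right_mem_Icc.mpr hab)

end Wronskian

theorem deriv_zero_mul_eq_of_symmetric {g φ φd u ud : ℝ → ℂ}
    (hg : ∀ z ∈ Icc (0 : ℝ) 1, g (1 - z) = g z)
    (hφ : ∀ z ∈ Icc (0 : ℝ) 1, HasDerivAt φ (φd z) z)
    (hφd : ∀ z ∈ Icc (0 : ℝ) 1, HasDerivAt φd (g z * φ z) z)
    (hφ0 : φ 0 = 0) (hφ0' : φd 0 = 1)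
    (hu : ∀ z ∈ Icc (0 : ℝ) 1, HasDerivAt u (ud z) z)
    (hud : ∀ z ∈ Icc (0 : ℝ) 1, HasDerivAt ud (g z * u z) z) :
    ud 0 * φ 1 = u 1 - u 0 * φd 1 := by
  have hψ : ∀ z ∈ Icc (0 : ℝ) 1, HasDerivAt (fun x => φ (1 - x)) (-φd (1 - z)) z :=
    fun z hz => (hφ _ (Icc.mem_iff_one_sub_mem.mp hz)).comp_const_sub 1 z
  have hψ' : ∀ z ∈ Icc (0 : ℝ) 1,
      HasDerivAt (fun x => -φd (1 - x)) (g z * φ (1 - z)) z := fun z hz => by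
    have := ((hφd _ (Icc.mem_iff_one_sub_mem.mp hz)).comp_const_sub 1 z).neg
    rwa [neg_neg, hg z hz] at this
  have hW := wronskian_eq_of_hasDerivAt zero_le_one hu hud hψ hψ'
  simp only [sub_self, sub_zero, hφ0, hφ0'] at hW
  linear_combination hW

theorem sub_mul_eq_mul_iff_div_eq {K : Type*} [Field K] {S T x c d : K} (hd : d ≠ 0) :
    S - x * T = c * x ↔ 1 / d * S = (1 / d * T + c / d) * x := by
  constructor
  · intro h
    linear_combination 1 / d * h
  · intro h
    field_simp at h
    linear_combination h

theorem delta_coupling_iff_vertex_schroedinger_general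
    {V : Type*} [Fintype V] (G : SimpleGraph V) [DecidableRel G.Adj]
    (lam : ℂ)
    -- edge potentials, parametrized from each endpoint
    (Ve : V → V → ℝ → ℝ)
    (hVsym : ∀ v w, G.Adj v w → ∀ z ∈ Icc (0:ℝ) 1, Ve v w z = Ve v w (1 - z))
    -- fundamental solutions φ_e on each (oriented) edge
    (φ φd : V → V → ℝ → ℂ)
    (hφ : ∀ v w, G.Adj v w → ∀ z ∈ Icc (0:ℝ) 1, HasDerivAt (φ v w) (φd v w z) z)
    (hφd : ∀ v w, G.Adj v w → ∀ z ∈ Icc (0:ℝ) 1,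
      HasDerivAt (φd v w) (((Ve v w z : ℂ) - lam) * φ v w z) z)
    (hφ0 : ∀ v w, G.Adj v w → φ v w 0 = 0)
    (hφ0' : ∀ v w, G.Adj v w → φd v w 0 = 1)
    (hφ1 : ∀ v w, G.Adj v w → φ v w 1 ≠ 0)
    -- the family of edge solutions and its vertex values
    (u ud : V → V → ℝ → ℂ) (uh : V → ℂ)
    (hu : ∀ v w, G.Adj v w → ∀ z ∈ Icc (0:ℝ) 1, HasDerivAt (u v w) (ud v w z) z)
    (hud : ∀ v w, G.Adj v w → ∀ z ∈ Icc (0:ℝ) 1,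
      HasDerivAt (ud v w) (((Ve v w z : ℂ) - lam) * u v w z) z)
    (hor : ∀ v w, G.Adj v w → ∀ z ∈ Icc (0:ℝ) 1, u v w z = u w v (1 - z))
    (hcont : ∀ v w, G.Adj v w → u v w 0 = uh v)
    -- interior vertex and coupling constant
    (v₀ : V) (hdeg : 0 < G.degree v₀) (C : ℝ) :
    ((∑ w ∈ G.neighborFinset v₀, ud v₀ w 0) = (C : ℂ) * uh v₀) ↔
      ((1 / (G.degree v₀ : ℂ)) * ∑ w ∈ G.neighborFinset v₀, uh w / φ v₀ w 1
        = ((1 / (G.degree v₀ : ℂ)) * ∑ w ∈ G.neighborFinset v₀, φd v₀ w 1 / φ v₀ w 1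
            + (C : ℂ) / (G.degree v₀ : ℂ)) * uh v₀) := by
  have hedge : ∀ w ∈ G.neighborFinset v₀,
      ud v₀ w 0 = uh w / φ v₀ w 1 - uh v₀ * (φd v₀ w 1 / φ v₀ w 1) := by
    intro w hw
    rw [SimpleGraph.mem_neighborFinset] at hw
    have hu1 : u v₀ w 1 = uh w := by
      rw [hor v₀ w hw 1 (right_mem_Icc.mpr zero_le_one), sub_self, hcont w v₀ hw.symm]
    have h := deriv_zero_mul_eq_of_symmetric
      (fun z hz => by rw [hVsym v₀ w hw z hz]) (hφ v₀ w hw) (hφd v₀ w hw)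
      (hφ0 v₀ w hw) (hφ0' v₀ w hw) (hu v₀ w hw) (hud v₀ w hw)
    rw [hu1, hcont v₀ w hw] at h
    field_simp [hφ1 v₀ w hw]
    linear_combination h
  rw [Finset.sum_congr rfl hedge, Finset.sum_sub_distrib, ← Finset.mul_sum]
  exact sub_mul_eq_mul_iff_div_eq (Nat.cast_ne_zero.mpr hdeg.ne')

/-- On a finite quantum graph with unit edges, symmetric edge potentials and
nonvanishing `φ_e(1,λ)`, a vertex-continuous family of edge solutions of `(h_e - λ)u_e = 0`
satisfies the δ-coupling condition at an interior vertex `v₀` iff the discrete vertex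
Schrödinger equation holds at `v₀`. -/
theorem delta_coupling_iff_vertex_schroedinger
    {V : Type*} [Fintype V] (G : SimpleGraph V) [DecidableRel G.Adj]
    (lam : ℂ)
    -- edge potentials, parametrized from each endpoint
    (Ve : V → V → ℝ → ℝ)
    (hVsym : ∀ v w, G.Adj v w → ∀ z ∈ Icc (0:ℝ) 1, Ve v w z = Ve v w (1 - z))
    (hVor : ∀ v w, G.Adj v w → ∀ z ∈ Icc (0:ℝ) 1, Ve v w z = Ve w v (1 - z))
    -- fundamental solutions φ_e on each (oriented) edge
    (φ φd : V → V → ℝ → ℂ)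
    (hφ : ∀ v w, G.Adj v w → ∀ z ∈ Icc (0:ℝ) 1, HasDerivAt (φ v w) (φd v w z) z)
    (hφd : ∀ v w, G.Adj v w → ∀ z ∈ Icc (0:ℝ) 1,
      HasDerivAt (φd v w) (((Ve v w z : ℂ) - lam) * φ v w z) z)
    (hφ0 : ∀ v w, G.Adj v w → φ v w 0 = 0)
    (hφ0' : ∀ v w, G.Adj v w → φd v w 0 = 1)
    (hφ1 : ∀ v w, G.Adj v w → φ v w 1 ≠ 0)
    -- the family of edge solutions and its vertex values
    (u ud : V → V → ℝ → ℂ) (uh : V → ℂ)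
    (hu : ∀ v w, G.Adj v w → ∀ z ∈ Icc (0:ℝ) 1, HasDerivAt (u v w) (ud v w z) z)
    (hud : ∀ v w, G.Adj v w → ∀ z ∈ Icc (0:ℝ) 1,
      HasDerivAt (ud v w) (((Ve v w z : ℂ) - lam) * u v w z) z)
    (hor : ∀ v w, G.Adj v w → ∀ z ∈ Icc (0:ℝ) 1, u v w z = u w v (1 - z))
    (hcont : ∀ v w, G.Adj v w → u v w 0 = uh v)
    -- interior vertex and coupling constant
    (v₀ : V) (hdeg : 0 < G.degree v₀) (C : ℝ) :
    ((∑ w ∈ G.neighborFinset v₀, ud v₀ w 0) = (C : ℂ) * uh v₀) ↔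
      ((1 / (G.degree v₀ : ℂ)) * ∑ w ∈ G.neighborFinset v₀, uh w / φ v₀ w 1
        = ((1 / (G.degree v₀ : ℂ)) * ∑ w ∈ G.neighborFinset v₀, φd v₀ w 1 / φ v₀ w 1
            + (C : ℂ) / (G.degree v₀ : ℂ)) * uh v₀) :=
  delta_coupling_iff_vertex_schroedinger_general G lam Ve hVsym φ φd hφ hφd hφ0 hφ0' hφ1 u ud uh hu
    hud hor hcont v₀ hdeg C
end

section
/- Consider a finite connected induced subgraph Γ = (𝒱, ℰ) of the square lattice ℤ² contained in a rectangle, with boundary ∂𝒱 consisting of the degree-one vertices attached along the four sides, and the vertex equation (-Δ̂_{𝒱,λ} + Q̂_{𝒱,λ})û = 0 in 𝒱° with nonvanishing edge weights 1/φ_e(1,λ). Given Dirichlet data f̂ on ∂𝒱 \ (∂𝒱)_R (all boundary vertices except the right side) and Neumann data ĝ on the left side (∂𝒱)_L, there exists a unique function û on 𝒱 satisfying the vertex equation in 𝒱°, û = f̂ on ∂𝒱 \ (∂𝒱)_R, and ∂_ν û = ĝ on (∂𝒱)_L, where ∂_ν û(v) = -(1/d_v)∑_{w∼v, w∈𝒱°}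 û(w)/φ_{e}(1,λ). -/
/-- Interior vertices of the rectangular domain `{1,…,m} × {1,…,n}` in `ℤ²`. -/
def rectInterior (m n : ℤ) : Set (ℤ × ℤ) :=
  {p | 1 ≤ p.1 ∧ p.1 ≤ m ∧ 1 ≤ p.2 ∧ p.2 ≤ n}

/-- Left boundary vertices. -/
def rectBdryL (m n : ℤ) : Set (ℤ × ℤ) := {p | p.1 = 0 ∧ 1 ≤ p.2 ∧ p.2 ≤ n}

/-- Right boundary vertices. -/
def rectBdryR (m n : ℤ) : Set (ℤ × ℤ) := {p | p.1 = m + 1 ∧ 1 ≤ p.2 ∧ p.2 ≤ n}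

/-- Top boundary vertices. -/
def rectBdryT (m n : ℤ) : Set (ℤ × ℤ) := {p | p.2 = n + 1 ∧ 1 ≤ p.1 ∧ p.1 ≤ m}

/-- Bottom boundary vertices. -/
def rectBdryB (m n : ℤ) : Set (ℤ × ℤ) := {p | p.2 = 0 ∧ 1 ≤ p.1 ∧ p.1 ≤ m}

/-- All vertices of the rectangular domain (interior and the four boundary sides). -/
def rectVertices (m n : ℤ) : Set (ℤ × ℤ) :=
  rectInterior m n ∪ rectBdryL m n ∪ rectBdryR m n ∪ rectBdryT m n ∪ rectBdryB m n

noncomputable def colAux (n : ℤ) (a : ℤ × ℤ → ℤ × ℤ → ℂ) (Q f g : ℤ × ℤ → ℂ) : ℕ → ℤ → ℂ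
  | 0, j => f (0, j)
  | 1, j => -g (0, j) / a (0, j) (1, j)
  | (k+2), j =>
      (Q ((k : ℤ) + 1, j) * colAux n a Q f g (k+1) j
        - a ((k : ℤ) + 1, j) ((k : ℤ), j) * colAux n a Q f g k j
        - a ((k : ℤ) + 1, j) ((k : ℤ) + 1, j + 1) *
            (if 1 ≤ j + 1 ∧ j + 1 ≤ n then colAux n a Q f g (k+1) (j+1)
             else f ((k : ℤ) + 1, j + 1))
        - a ((k : ℤ) + 1, j) ((k : ℤ) + 1, j - 1) *
            (if 1 ≤ j - 1 ∧ j - 1 ≤ n then colAux n a Q f g (k+1) (j-1)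
             else f ((k : ℤ) + 1, j - 1)))
        / a ((k : ℤ) + 1, j) ((k : ℤ) + 2, j)

lemma colAux_step (n : ℤ) (a : ℤ × ℤ → ℤ × ℤ → ℂ) (Q f g : ℤ × ℤ → ℂ)
    (k : ℕ) (i : ℤ) (hi : (k : ℤ) = i - 1) (j : ℤ) :
    colAux n a Q f g (k+2) j =
      (Q (i, j) * colAux n a Q f g (k+1) j
        - a (i, j) (i - 1, j) * colAux n a Q f g k j
        - a (i, j) (i, j + 1) *
            (if 1 ≤ j + 1 ∧ j + 1 ≤ n then colAux n a Q f g (k+1) (j+1) else f (i, j + 1))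
        - a (i, j) (i, j - 1) *
            (if 1 ≤ j - 1 ∧ j - 1 ≤ n then colAux n a Q f g (k+1) (j-1) else f (i, j - 1)))
        / a (i, j) (i + 1, j) := by
  have h1 : (k : ℤ) + 1 = i := by omega
  have h2 : (k : ℤ) + 2 = i + 1 := by omega
  have h3 : (k : ℤ) = i - 1 := hi
  rw [colAux, h1, h2, h3]

noncomputable def uhSol (m n : ℤ) (a : ℤ × ℤ → ℤ × ℤ → ℂ) (Q f g : ℤ × ℤ → ℂ) :
    ℤ × ℤ → ℂ := fun v =>
  if 1 ≤ v.2 ∧ v.2 ≤ n then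
    (if 0 ≤ v.1 ∧ v.1 ≤ m + 1 then colAux n a Q f g v.1.toNat v.2 else 0)
  else if (v.2 = 0 ∨ v.2 = n + 1) ∧ 1 ≤ v.1 ∧ v.1 ≤ m then f v
  else 0

lemma uhSol_col (m n : ℤ) (a : ℤ × ℤ → ℤ × ℤ → ℂ) (Q f g : ℤ × ℤ → ℂ)
    (i j : ℤ) (hi0 : 0 ≤ i) (hi1 : i ≤ m + 1) (hj0 : 1 ≤ j) (hj1 : j ≤ n) :
    uhSol m n a Q f g (i, j) = colAux n a Q f g i.toNat j := by
  simp [uhSol, hi0, hi1, hj0, hj1]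

lemma bridge (m n : ℤ) (hm : 1 ≤ m) (a : ℤ × ℤ → ℤ × ℤ → ℂ) (ha : ∀ v w, a v w ≠ 0)
    (Q f g : ℤ × ℤ → ℂ) (u : ℤ × ℤ → ℂ)
    (heq : ∀ v ∈ rectInterior m n,
        a v (v.1 + 1, v.2) * u (v.1 + 1, v.2) +
        a v (v.1 - 1, v.2) * u (v.1 - 1, v.2) +
        a v (v.1, v.2 + 1) * u (v.1, v.2 + 1) +
        a v (v.1, v.2 - 1) * u (v.1, v.2 - 1) = Q v * u v)
    (hf : ∀ v ∈ rectBdryL m n ∪ rectBdryT m n ∪ rectBdryB m n, u v = f v)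
    (hg : ∀ v ∈ rectBdryL m n, -(a v (v.1 + 1, v.2) * u (v.1 + 1, v.2)) = g v) :
    ∀ k : ℕ, (k : ℤ) ≤ m + 1 → ∀ j : ℤ, 1 ≤ j → j ≤ n →
      u ((k : ℤ), j) = colAux n a Q f g k j := by
  intro k
  induction k using Nat.strong_induction_on with
  | _ k ih =>
    rcases k with _ | _ | k
    · intro _ j hj1 hj2
      have := hf (0, j) (Or.inl (Or.inl ⟨rfl, hj1, hj2⟩))
      simpa [colAux] using this
    · intro _ j hj1 hj2
      have h := hg (0, j) ⟨rfl, hj1, hj2⟩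
      simp only [colAux]
      push_cast
      rw [eq_div_iff (ha _ _)]
      norm_num only at h
      linear_combination -h
    · intro hk j hj1 hj2
      have hk' : (k : ℤ) + 2 ≤ m + 1 := by push_cast at hk; omega
      have hmem : ((k : ℤ) + 1, j) ∈ rectInterior m n := ⟨by omega, by omega, hj1, hj2⟩
      have h := heq _ hmem
      simp only at h
      have e1 : (k : ℤ) + 1 + 1 = (k : ℤ) + 2 := by ring
      have e2 : (k : ℤ) + 1 - 1 = (k : ℤ) := by ring
      rw [e1, e2] at h
      -- substitute inductive values
      have hu0 : u ((k : ℤ), j) = colAux n a Q f g k j :=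
        ih k (by omega) (by omega) j hj1 hj2
      have hu1 : u ((k : ℤ) + 1, j) = colAux n a Q f g (k+1) j := by
        have := ih (k+1) (by omega) (by push_cast; omega) j hj1 hj2
        push_cast at this; exact this
      have hup : u ((k : ℤ) + 1, j + 1) =
          (if 1 ≤ j + 1 ∧ j + 1 ≤ n then colAux n a Q f g (k+1) (j+1)
           else f ((k : ℤ) + 1, j + 1)) := by
        by_cases hcase : 1 ≤ j + 1 ∧ j + 1 ≤ n
        · rw [if_pos hcase]
          have := ih (k+1) (by omega) (by push_cast; omega) (j+1) hcase.1 hcase.2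
          push_cast at this; exact this
        · rw [if_neg hcase]
          have hjn : j = n := by omega
          exact hf _ (Or.inl (Or.inr ⟨by simp [hjn], by omega, by omega⟩))
      have hdn : u ((k : ℤ) + 1, j - 1) =
          (if 1 ≤ j - 1 ∧ j - 1 ≤ n then colAux n a Q f g (k+1) (j-1)
           else f ((k : ℤ) + 1, j - 1)) := by
        by_cases hcase : 1 ≤ j - 1 ∧ j - 1 ≤ n
        · rw [if_pos hcase]
          have := ih (k+1) (by omega) (by push_cast; omega) (j-1) hcase.1 hcase.2
          push_cast at this; exact this
        · rw [if_neg hcase]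
          have hj1' : j = 1 := by omega
          exact hf _ (Or.inr ⟨by simp [hj1'], by omega, by omega⟩)
      rw [hu0, hu1, hup, hdn] at h
      rw [colAux_step n a Q f g k ((k : ℤ) + 1) (by ring) j]
      have e3 : (k : ℤ) + 1 - 1 = (k : ℤ) := by ring
      have e4 : (k : ℤ) + 1 + 1 = (k : ℤ) + 2 := by ring
      rw [e3, e4]
      push_cast
      rw [show ((k : ℤ) + 1 + 1) = (k : ℤ) + 2 from by ring, eq_div_iff (ha _ _)]
      linear_combination h

lemma uhSol_zero (m n : ℤ) (a : ℤ × ℤ → ℤ × ℤ → ℂ) (Q f g : ℤ × ℤ → ℂ) :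
    ∀ v, v ∉ rectVertices m n → uhSol m n a Q f g v = 0 := by
  rintro ⟨x, y⟩ hv
  simp only [rectVertices, rectInterior, rectBdryL, rectBdryR, rectBdryT, rectBdryB,
    Set.mem_union, Set.mem_setOf_eq, not_or] at hv
  simp only [uhSol]
  split_ifs with h1 h2 h3
  · exfalso; omega
  · rfl
  · exfalso; omega
  · rfl

lemma uhSol_dirichlet (m n : ℤ) (hm : 1 ≤ m) (hn : 1 ≤ n) (a : ℤ × ℤ → ℤ × ℤ → ℂ) (Q f g : ℤ × ℤ → ℂ) :
    ∀ v ∈ rectBdryL m n ∪ rectBdryT m n ∪ rectBdryB m n, uhSol m n a Q f g v = f v := by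
  rintro ⟨x, y⟩ hv
  rcases hv with (hL | hT) | hB
  · obtain ⟨hx, hy1, hy2⟩ := hL
    simp only at hx; subst hx
    rw [uhSol_col m n a Q f g 0 y le_rfl (by omega) hy1 hy2]
    simp [colAux]
  · obtain ⟨hy, hx1, hx2⟩ := hT
    simp only at hy hx1 hx2; subst hy
    simp only [uhSol]
    split_ifs with hA hB hC
    · omega
    · omega
    · rfl
    · exact absurd ⟨Or.inr trivial, hx1, hx2⟩ hC
  · obtain ⟨hy, hx1, hx2⟩ := hB
    simp only at hy hx1 hx2; subst hy
    simp only [uhSol]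
    split_ifs with hA hB hC
    · omega
    · omega
    · rfl
    · exact absurd ⟨Or.inl trivial, hx1, hx2⟩ hC

lemma uhSol_neumann (m n : ℤ) (hm : 1 ≤ m) (a : ℤ × ℤ → ℤ × ℤ → ℂ)
    (ha : ∀ v w, a v w ≠ 0) (Q f g : ℤ × ℤ → ℂ) :
    ∀ v ∈ rectBdryL m n,
      -(a v (v.1 + 1, v.2) * uhSol m n a Q f g (v.1 + 1, v.2)) = g v := by
  rintro ⟨x, y⟩ ⟨hx, hy1, hy2⟩
  simp only at hx hy1 hy2; subst hx
  simp only
  norm_num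
  rw [uhSol_col m n a Q f g 1 y (by omega) (by omega) hy1 hy2]
  show -(a (0, y) (1, y) * colAux n a Q f g 1 y) = g (0, y)
  simp only [colAux]
  rw [mul_comm, div_mul_cancel₀ _ (ha _ _), neg_neg]

lemma uhSol_eq (m n : ℤ) (hm : 1 ≤ m) (a : ℤ × ℤ → ℤ × ℤ → ℂ)
    (ha : ∀ v w, a v w ≠ 0) (Q f g : ℤ × ℤ → ℂ) :
    ∀ v ∈ rectInterior m n,
      a v (v.1 + 1, v.2) * uhSol m n a Q f g (v.1 + 1, v.2) +
      a v (v.1 - 1, v.2) * uhSol m n a Q f g (v.1 - 1, v.2) +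
      a v (v.1, v.2 + 1) * uhSol m n a Q f g (v.1, v.2 + 1) +
      a v (v.1, v.2 - 1) * uhSol m n a Q f g (v.1, v.2 - 1) =
        Q v * uhSol m n a Q f g v := by
  rintro ⟨i, j⟩ ⟨hi1, hi2, hj1, hj2⟩
  simp only at hi1 hi2 hj1 hj2 ⊢
  set k : ℕ := (i - 1).toNat with hkdef
  have hk : (k : ℤ) = i - 1 := by omega
  have h1 : uhSol m n a Q f g (i + 1, j) = colAux n a Q f g (k + 2) j := by
    rw [uhSol_col m n a Q f g (i+1) j (by omega) (by omega) hj1 hj2,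
      show (i+1).toNat = k + 2 from by omega]
  have h2 : uhSol m n a Q f g (i, j) = colAux n a Q f g (k + 1) j := by
    rw [uhSol_col m n a Q f g i j (by omega) (by omega) hj1 hj2,
      show i.toNat = k + 1 from by omega]
  have h3 : uhSol m n a Q f g (i - 1, j) = colAux n a Q f g k j := by
    rw [uhSol_col m n a Q f g (i-1) j (by omega) (by omega) hj1 hj2,
      show (i-1).toNat = k from by omega]
  have h4 : uhSol m n a Q f g (i, j + 1) =
      (if 1 ≤ j + 1 ∧ j + 1 ≤ n then colAux n a Q f g (k+1) (j+1) else f (i, j + 1)) := by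
    by_cases hc : 1 ≤ j + 1 ∧ j + 1 ≤ n
    · rw [if_pos hc, uhSol_col m n a Q f g i (j+1) (by omega) (by omega) hc.1 hc.2,
        show i.toNat = k + 1 from by omega]
    · rw [if_neg hc]
      have hjn : j = n := by omega
      subst hjn
      simp only [uhSol]
      split_ifs with hA
      · rfl
      · exact absurd ⟨by norm_num, by omega, by omega⟩ hA
  have h5 : uhSol m n a Q f g (i, j - 1) =
      (if 1 ≤ j - 1 ∧ j - 1 ≤ n then colAux n a Q f g (k+1) (j-1) else f (i, j - 1)) := by
    by_cases hc : 1 ≤ j - 1 ∧ j - 1 ≤ n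
    · rw [if_pos hc, uhSol_col m n a Q f g i (j-1) (by omega) (by omega) hc.1 hc.2,
        show i.toNat = k + 1 from by omega]
    · rw [if_neg hc]
      have hj1' : j = 1 := by omega
      subst hj1'
      simp only [uhSol]
      split_ifs with hA
      · rfl
      · exact absurd ⟨by norm_num, by omega, by omega⟩ hA
  rw [h1, h2, h3, h4, h5, colAux_step n a Q f g k i (by omega) j,
    ← mul_div_assoc, mul_div_cancel_left₀ _ (ha _ _)]
  ring

/-- Mixed Cauchy problem for the vertex Schrödinger operator on a
rectangular domain of the square lattice, with nonvanishing edge weights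
`a_e(λ) = 1/φ_e(1,λ)`: given Dirichlet data `f` on all boundary sides except the right
one, and Neumann data `g` on the left side, there is a unique function `uh` on the
vertex set (extended by zero outside) solving the vertex equation in the interior with
`uh = f` on `∂𝒱 \ (∂𝒱)_R` and `∂_ν uh = g` on `(∂𝒱)_L`, where
`∂_ν uh(v) = -(1/d_v)∑_{w∼v, w∈𝒱°} a(v,w)·uh(w)`. -/
theorem square_rect_mixed_bvp_unique_solvable
    (m n : ℤ) (hm : 1 ≤ m) (hn : 1 ≤ n)
    (a : ℤ × ℤ → ℤ × ℤ → ℂ) (ha : ∀ v w, a v w ≠ 0)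
    (Q : ℤ × ℤ → ℂ) (f g : ℤ × ℤ → ℂ) :
    ∃! uh : ℤ × ℤ → ℂ,
      (∀ v, v ∉ rectVertices m n → uh v = 0) ∧
      (∀ v ∈ rectInterior m n,
        a v (v.1 + 1, v.2) * uh (v.1 + 1, v.2) +
        a v (v.1 - 1, v.2) * uh (v.1 - 1, v.2) +
        a v (v.1, v.2 + 1) * uh (v.1, v.2 + 1) +
        a v (v.1, v.2 - 1) * uh (v.1, v.2 - 1) = Q v * uh v) ∧
      (∀ v ∈ rectBdryL m n ∪ rectBdryT m n ∪ rectBdryB m n, uh v = f v) ∧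
      (∀ v ∈ rectBdryL m n, -(a v (v.1 + 1, v.2) * uh (v.1 + 1, v.2)) = g v) := by
  refine ⟨uhSol m n a Q f g,
    ⟨uhSol_zero m n a Q f g, uhSol_eq m n hm a ha Q f g,
      uhSol_dirichlet m n hm hn a Q f g, uhSol_neumann m n hm a ha Q f g⟩, ?_⟩
  rintro u ⟨hz, heq, hf, hg⟩
  funext v
  obtain ⟨x, y⟩ := v
  have key := bridge m n hm a ha Q f g u heq hf hg
  by_cases hy : 1 ≤ y ∧ y ≤ n
  · by_cases hx : 0 ≤ x ∧ x ≤ m + 1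
    · have h1 := key x.toNat (by omega) y hy.1 hy.2
      rw [show ((x.toNat : ℤ)) = x from by omega] at h1
      rw [h1, uhSol_col m n a Q f g x y hx.1 hx.2 hy.1 hy.2]
    · have hnv : (x, y) ∉ rectVertices m n := by
        simp only [rectVertices, rectInterior, rectBdryL, rectBdryR, rectBdryT, rectBdryB,
          Set.mem_union, Set.mem_setOf_eq, not_or]
        omega
      rw [hz _ hnv, uhSol_zero m n a Q f g _ hnv]
  · by_cases hb : (y = 0 ∨ y = n + 1) ∧ 1 ≤ x ∧ x ≤ m
    · obtain ⟨hy0 | hy1, hx1, hx2⟩ := hb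
      · subst hy0
        rw [hf (x, 0) (Or.inr ⟨rfl, hx1, hx2⟩),
          uhSol_dirichlet m n hm hn a Q f g (x, 0) (Or.inr ⟨rfl, hx1, hx2⟩)]
      · subst hy1
        rw [hf (x, n + 1) (Or.inl (Or.inr ⟨rfl, hx1, hx2⟩)),
          uhSol_dirichlet m n hm hn a Q f g (x, n + 1) (Or.inl (Or.inr ⟨rfl, hx1, hx2⟩))]
    · have hnv : (x, y) ∉ rectVertices m n := by
        simp only [rectVertices, rectInterior, rectBdryL, rectBdryR, rectBdryT, rectBdryB,
          Set.mem_union, Set.mem_setOf_eq, not_or]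
        omega
      rw [hz _ hnv, uhSol_zero m n a Q f g _ hnv]
end
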